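/- arXiv:2408.05818 — 5 statements merged into one kernel-verified Lean document; each statement's English description precedes it below -/
import Mathlib

section
/- For all v, v1 in R^3, the integral I(v,v1) = ∫_{S^2} (1 + |v*|^2)^{-3/2} dσ satisfies I(v,v1) ≤ C/(1 + |v|^2 + |v1|^2) for a universal constant C, where v* = (v+v1)/2 + (|v-v1|/2)σ. -/
open MeasureTheory Metric Set
open scoped RealInnerProductSpace Pointwise ENNReal NNReal

noncomputable section

local notation "E3" => EuclideanSpace ℝ (Fin 3)

lemma volume_box (a b : Fin 3 → ℝ) :
    volume ((MeasurableEquiv.toLp 2 (Fin 3 → ℝ)).symm ⁻¹' (Set.univ.pi fun i => Icc (a i) (b i)))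
      = ∏ i, ENNReal.ofReal (b i - a i) := by
  rw [(EuclideanSpace.volume_preserving_symm_measurableEquiv_toLp (Fin 3)).measure_preimage
    (MeasurableSet.univ_pi fun i => measurableSet_Icc).nullMeasurableSet]
  rw [volume_pi_pi]
  simp [Real.volume_Icc]

lemma mem_box_iff (y : E3) (a b : Fin 3 → ℝ) :
    y ∈ (MeasurableEquiv.toLp 2 (Fin 3 → ℝ)).symm ⁻¹' (Set.univ.pi fun i => Icc (a i) (b i))
      ↔ ∀ i, a i ≤ y i ∧ y i ≤ b i := by
  simp [Pi.le_def, forall_and]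

lemma norm_sq_eq (y : E3) : ‖y‖ ^ 2 = y 0 ^ 2 + y 1 ^ 2 + y 2 ^ 2 := by
  rw [EuclideanSpace.norm_eq]
  rw [Real.sq_sqrt (by positivity)]
  simp [Fin.sum_univ_three, sq_abs]


lemma abs_coord_le (y : E3) (i : Fin 3) : |y i| ≤ ‖y‖ := by
  rw [EuclideanSpace.norm_eq]
  have h1 : |y i| = Real.sqrt (‖y i‖ ^ 2) := by
    rw [Real.norm_eq_abs, Real.sqrt_sq_eq_abs, abs_abs]
  rw [h1]
  apply Real.sqrt_le_sqrt
  exact Finset.single_le_sum (f := fun j => ‖y j‖ ^ 2) (fun j _ => by positivity)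
    (Finset.mem_univ i)

/-- Volume bound for the solid cone `{x : ‖x‖ ≤ 1, ⟪e₀,x⟫ ≤ c ‖x‖}` where the direction is
the first basis vector. -/
lemma cone_volume_bound (c : ℝ) (hc : -1 ≤ c) :
    volume {y : E3 | ‖y‖ ≤ 1 ∧ y 0 ≤ c * ‖y‖} ≤ ENNReal.ofReal (16 * (1 + c)) := by
  rcases le_or_gt 0 c with h0 | h0
  · calc volume {y : E3 | ‖y‖ ≤ 1 ∧ y 0 ≤ c * ‖y‖}
        ≤ volume ((MeasurableEquiv.toLp 2 (Fin 3 → ℝ)).symm ⁻¹'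
            (Set.univ.pi fun _ => Icc (-1 : ℝ) 1)) := by
          apply measure_mono
          intro y hy
          rw [mem_box_iff]
          intro i
          have h1 : |y i| ≤ 1 := (abs_coord_le y i).trans hy.1
          exact ⟨by linarith [abs_le.mp h1], by linarith [abs_le.mp h1]⟩
    _ ≤ ENNReal.ofReal (16 * (1 + c)) := by
          rw [volume_box]
          simp only [Fin.prod_univ_three]
          rw [← ENNReal.ofReal_mul (by norm_num), ← ENNReal.ofReal_mul (by norm_num)]
          apply ENNReal.ofReal_le_ofReal
          nlinarith
  · set s : ℝ := Real.sqrt (2 * (1 + c)) with hs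
    have hs2 : s ^ 2 = 2 * (1 + c) := Real.sq_sqrt (by linarith)
    have hsnn : 0 ≤ s := Real.sqrt_nonneg _
    calc volume {y : E3 | ‖y‖ ≤ 1 ∧ y 0 ≤ c * ‖y‖}
        ≤ volume ((MeasurableEquiv.toLp 2 (Fin 3 → ℝ)).symm ⁻¹'
            (Set.univ.pi fun i => Icc (![(-1:ℝ), -s, -s] i) (![(1:ℝ), s, s] i))) := by
          apply measure_mono
          intro y hy
          obtain ⟨hy1, hy2⟩ := hy
          have hy0neg : y 0 ≤ 0 := hy2.trans (by nlinarith [norm_nonneg y])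
          have hsq : c ^ 2 * ‖y‖ ^ 2 ≤ y 0 ^ 2 := by
            nlinarith [mul_self_le_mul_self
              (by nlinarith [norm_nonneg y] : (0:ℝ) ≤ -c * ‖y‖)
              (by linarith : -c * ‖y‖ ≤ -y 0)]
          have hperp : y 1 ^ 2 + y 2 ^ 2 ≤ 2 * (1 + c) := by
            have hn := norm_sq_eq y
            have h1 : ‖y‖ ^ 2 ≤ 1 := by nlinarith [norm_nonneg y]
            nlinarith [mul_nonneg (by nlinarith : (0:ℝ) ≤ 1 - c ^ 2) (by linarith : (0:ℝ) ≤ 1 - ‖y‖ ^ 2)]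
          have hb1 : |y 1| ≤ s := by
            rw [← Real.sqrt_sq_eq_abs]
            exact Real.sqrt_le_sqrt (by nlinarith [sq_nonneg (y 2)])
          have hb2 : |y 2| ≤ s := by
            rw [← Real.sqrt_sq_eq_abs]
            exact Real.sqrt_le_sqrt (by nlinarith [sq_nonneg (y 1)])
          have hb0 : |y 0| ≤ 1 := (abs_coord_le y 0).trans hy1
          rw [mem_box_iff]
          intro i
          fin_cases i
          · exact show (-1:ℝ) ≤ y 0 ∧ y 0 ≤ 1 from
              ⟨by linarith [abs_le.mp hb0], by linarith [abs_le.mp hb0]⟩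
          · exact show -s ≤ y 1 ∧ y 1 ≤ s from
              ⟨by linarith [abs_le.mp hb1], by linarith [abs_le.mp hb1]⟩
          · exact show -s ≤ y 2 ∧ y 2 ≤ s from
              ⟨by linarith [abs_le.mp hb2], by linarith [abs_le.mp hb2]⟩
    _ ≤ ENNReal.ofReal (16 * (1 + c)) := by
          rw [volume_box]
          rw [show (∏ i, ENNReal.ofReal (![(1:ℝ), s, s] i - ![(-1:ℝ), -s, -s] i))
            = ENNReal.ofReal (1 - (-1)) * ENNReal.ofReal (s - -s) * ENNReal.ofReal (s - -s)
            from Fin.prod_univ_three _]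
          rw [← ENNReal.ofReal_mul (by norm_num), ← ENNReal.ofReal_mul (by nlinarith)]
          apply ENNReal.ofReal_le_ofReal
          nlinarith


lemma cap_bound (u : E3) (hu : ‖u‖ = 1) (c : ℝ) :
    (volume : Measure E3).toSphere {σ : sphere (0 : E3) 1 | ⟪u, (σ : E3)⟫ ≤ c}
      ≤ ENNReal.ofReal (48 * max 0 (1 + c)) := by
  have hScont : Continuous fun σ : sphere (0 : E3) 1 => ⟪u, (σ : E3)⟫ :=
    Continuous.inner continuous_const continuous_subtype_val
  have hSm : MeasurableSet {σ : sphere (0 : E3) 1 | ⟪u, (σ : E3)⟫ ≤ c} :=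
    measurableSet_le hScont.measurable measurable_const
  rw [Measure.toSphere_apply' _ hSm]
  set T := {x : E3 | ‖x‖ ≤ 1 ∧ ⟪u, x⟫ ≤ c * ‖x‖} with hTdef
  have hsub : Ioo (0:ℝ) 1 • ((↑) '' {σ : sphere (0 : E3) 1 | ⟪u, (σ : E3)⟫ ≤ c}) ⊆ T := by
    rintro x hx
    rcases Set.mem_smul.mp hx with ⟨r, hr, y, hy, rfl⟩
    rcases hy with ⟨σ, hσ, rfl⟩
    have hσ1 : ‖(σ : E3)‖ = 1 := by
      have := σ.2
      rwa [mem_sphere_zero_iff_norm] at this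
    constructor
    · rw [norm_smul, hσ1, Real.norm_eq_abs, abs_of_pos hr.1]
      simp; linarith [hr.2]
    · rw [real_inner_smul_right, norm_smul, hσ1, Real.norm_eq_abs, abs_of_pos hr.1]
      have : ⟪u, (σ : E3)⟫ ≤ c := hσ
      simp only [mul_one]
      nlinarith [hr.1]
  have hT : volume T ≤ ENNReal.ofReal (16 * max 0 (1 + c)) := by
    rcases lt_or_ge c (-1) with hc | hc
    · have hT0 : T ⊆ {0} := by
        intro x hx
        have h1 : -(‖u‖ * ‖x‖) ≤ ⟪u, x⟫ := neg_le_of_abs_le (abs_real_inner_le_norm u x)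
        rw [hu, one_mul] at h1
        have h2 : (1 + c) * ‖x‖ ≥ 0 := by nlinarith [hx.2]
        have h3 : ‖x‖ = 0 := by nlinarith [norm_nonneg x]
        simpa using norm_eq_zero.mp h3
      calc volume T ≤ volume ({0} : Set E3) := measure_mono hT0
        _ = 0 := measure_singleton 0
        _ ≤ _ := zero_le
    · -- reflect u to the first coordinate vector
      set e0 : E3 := EuclideanSpace.single 0 1 with he0def
      have he0 : ‖e0‖ = 1 := by
        simp [he0def, EuclideanSpace.nnnorm_single, ← coe_nnnorm]
      set R := Submodule.reflection (ℝ ∙ (u - e0))ᗮ with hRdef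
      have hRu : R u = e0 := Submodule.reflection_sub (by rw [hu, he0])
      have hkey : ∀ x : E3, ⟪u, x⟫ = (R x) 0 := by
        intro x
        calc ⟪u, x⟫ = ⟪R u, R x⟫ := (R.inner_map_map u x).symm
          _ = ⟪e0, R x⟫ := by rw [hRu]
          _ = (R x) 0 := by
              rw [he0def, EuclideanSpace.inner_single_left]; simp
      have hMeas : MeasurableSet {y : E3 | ‖y‖ ≤ 1 ∧ y 0 ≤ c * ‖y‖} := by
        have hcont0 : Continuous fun y : E3 => y 0 := (EuclideanSpace.proj (0 : Fin 3)).continuous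
        exact (measurableSet_le continuous_norm.measurable measurable_const).inter
          (measurableSet_le hcont0.measurable (continuous_const.mul continuous_norm).measurable)
      have hTeq : T = R ⁻¹' {y : E3 | ‖y‖ ≤ 1 ∧ y 0 ≤ c * ‖y‖} := by
        ext x
        simp only [hTdef, Set.mem_preimage, Set.mem_setOf_eq, R.norm_map, hkey x]
      rw [hTeq, R.measurePreserving.measure_preimage hMeas.nullMeasurableSet]
      have := cone_volume_bound c (by linarith)
      rwa [max_eq_right (by linarith : (0:ℝ) ≤ 1 + c)]
  refine le_trans (mul_le_mul_right ((measure_mono hsub).trans hT) _) ?_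
  rw [finrank_euclideanSpace_fin]
  rw [show ((3 : ℕ) : ℝ≥0∞) = ENNReal.ofReal 3 by simp,
    ← ENNReal.ofReal_mul (by norm_num)]
  exact ENNReal.ofReal_le_ofReal (le_of_eq (by ring))



lemma toSphere_univ_le : ((volume : Measure E3).toSphere univ).toReal ≤ 24 := by
  have h2 : volume (ball (0:E3) 1) ≤ ENNReal.ofReal 8 := by
    have hsub : ball (0:E3) 1 ⊆ (MeasurableEquiv.toLp 2 (Fin 3 → ℝ)).symm ⁻¹'
        (Set.univ.pi fun _ => Icc (-1:ℝ) 1) := by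
      intro y hy
      rw [mem_box_iff]
      intro i
      have h1 : |y i| ≤ 1 := (abs_coord_le y i).trans (le_of_lt (mem_ball_zero_iff.mp hy))
      exact ⟨by linarith [abs_le.mp h1], by linarith [abs_le.mp h1]⟩
    refine le_trans (measure_mono hsub) ?_
    · rw [volume_box]
      simp only [Fin.prod_univ_three]
      rw [← ENNReal.ofReal_mul (by norm_num), ← ENNReal.ofReal_mul (by norm_num)]
      exact ENNReal.ofReal_le_ofReal (by norm_num)
  have h1 : (volume : Measure E3).toSphere univ ≤ ENNReal.ofReal 24 := by
    rw [Measure.toSphere_apply_univ, finrank_euclideanSpace_fin]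
    calc ((3:ℕ) : ℝ≥0∞) * volume (ball (0:E3) 1) ≤ ENNReal.ofReal 3 * ENNReal.ofReal 8 := by
          refine mul_le_mul' (le_of_eq (by simp)) h2
      _ = ENNReal.ofReal 24 := by rw [← ENNReal.ofReal_mul (by norm_num)]; norm_num
  exact ENNReal.toReal_le_of_le_ofReal (by norm_num) h1

set_option maxHeartbeats 2000000 in
theorem sphere_integral_decay :
    ∃ C : ℝ, 0 < C ∧
      ∀ v v1 : EuclideanSpace ℝ (Fin 3),
        (∫ σ : sphere (0 : EuclideanSpace ℝ (Fin 3)) 1,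
            (1 + ‖(1/2 : ℝ) • (v + v1) + (‖v - v1‖ / 2) • (σ : EuclideanSpace ℝ (Fin 3))‖ ^ 2)
              ^ (-(3 : ℝ) / 2)
            ∂((volume : Measure (EuclideanSpace ℝ (Fin 3))).toSphere))
          ≤ C / (1 + ‖v‖ ^ 2 + ‖v1‖ ^ 2) := by
  refine ⟨1152, by norm_num, fun v v1 => ?_⟩
  set a : E3 := (1/2 : ℝ) • (v + v1) with ha
  set b : ℝ := ‖v - v1‖ / 2 with hbdef
  set A : ℝ := ‖a‖ with hA
  have hb0 : 0 ≤ b := by positivity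
  have hA0 : 0 ≤ A := norm_nonneg _
  set μ := (volume : Measure E3).toSphere with hμ
  set f : sphere (0:E3) 1 → ℝ :=
    fun σ => (1 + ‖a + b • (σ : E3)‖ ^ 2) ^ (-(3:ℝ)/2) with hfdef
  have hXge1 : ∀ σ : sphere (0:E3) 1, (1:ℝ) ≤ 1 + ‖a + b • (σ : E3)‖ ^ 2 := by
    intro σ; nlinarith [sq_nonneg ‖a + b • (σ : E3)‖]
  have hfpos : ∀ σ, 0 ≤ f σ := fun σ => Real.rpow_nonneg (by positivity) _
  have hf1 : ∀ σ, f σ ≤ 1 := fun σ =>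
    Real.rpow_le_one_of_one_le_of_nonpos (hXge1 σ) (by norm_num)
  have hfc : Continuous f := by
    apply Continuous.rpow_const
    · apply Continuous.add continuous_const
      apply Continuous.pow
      exact (continuous_const.add (continuous_subtype_val.const_smul b)).norm
    · intro σ; exact Or.inl (by positivity)
  have hint : Integrable f μ := by
    refine (integrable_const (1:ℝ)).mono' hfc.aestronglyMeasurable (ae_of_all _ fun σ => ?_)
    rw [Real.norm_eq_abs, abs_of_nonneg (hfpos σ)]
    simpa using hf1 σ
  set Q : ℝ := A ^ 2 + b ^ 2 with hQ
  have hQ0 : 0 ≤ Q := by positivity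
  -- uniform bound by a constant
  have hconstbd : ∀ Y : ℝ, (∀ σ, f σ ≤ Y) → ∫ σ, f σ ∂μ ≤ 24 * Y := by
    intro Y hY
    have h1 : ∫ σ, f σ ∂μ ≤ ∫ _σ : sphere (0:E3) 1, Y ∂μ :=
      integral_mono_of_nonneg (ae_of_all _ hfpos) (integrable_const Y) (ae_of_all _ hY)
    rw [integral_const, smul_eq_mul] at h1
    refine h1.trans ?_
    have hY0 : 0 ≤ Y := le_trans (hfpos ⟨EuclideanSpace.single 0 1, by
      simp [mem_sphere_zero_iff_norm, ← coe_nnnorm, EuclideanSpace.nnnorm_single]⟩) (hY _)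
    exact mul_le_mul_of_nonneg_right toSphere_univ_le hY0
  have key : ∫ σ, f σ ∂μ ≤ 576 / (1 + Q) := by
    rcases le_or_gt (4 * A * b) Q with hreg | hreg
    · -- pointwise regime
      have hpt : ∀ σ, f σ ≤ (1 + Q/2)⁻¹ := by
        intro σ
        set X : ℝ := 1 + ‖a + b • (σ : E3)‖ ^ 2 with hX
        have h1 : |A - b| ≤ ‖a + b • (σ : E3)‖ := by
          have h2 : |‖a‖ - ‖b • (σ : E3)‖| ≤ ‖a + b • (σ : E3)‖ := by
            simpa [sub_neg_eq_add] using abs_norm_sub_norm_le a (-(b • (σ : E3)))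
          have hσ1 : ‖(σ : E3)‖ = 1 := mem_sphere_zero_iff_norm.mp σ.2
          have hbs : ‖b • (σ : E3)‖ = b := by
            rw [norm_smul, hσ1, mul_one, Real.norm_eq_abs, abs_of_nonneg hb0]
          rw [hA]
          rw [hbs] at h2
          exact h2
        have h3 : (A - b)^2 ≤ ‖a + b • (σ : E3)‖ ^ 2 := by
          nlinarith [abs_nonneg (A - b), sq_abs (A - b), norm_nonneg (a + b • (σ : E3))]
        have h4 : 1 + Q/2 ≤ X := by rw [hX]; nlinarith
        have h5 : f σ ≤ X ^ (-1 : ℝ) :=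
          Real.rpow_le_rpow_of_exponent_le (hXge1 σ) (by norm_num)
        rw [Real.rpow_neg_one] at h5
        refine h5.trans ?_
        exact inv_anti₀ (by positivity) h4
      have h6 := hconstbd _ hpt
      refine h6.trans ?_
      rw [← div_eq_mul_inv, div_le_div_iff₀ (by positivity) (by positivity)]
      nlinarith
    · -- layer-cake regime : Q < 4 A b, so A, b > 0
      have hApos : 0 < A := by nlinarith
      have hbpos : 0 < b := by nlinarith
      set M : ℝ := 2 * A * b with hM
      have hMpos : 0 < M := by positivity
      have hMQ : M ≤ Q := by nlinarith [sq_nonneg (A - b)]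
      set u : E3 := A⁻¹ • a with hu
      have hunorm : ‖u‖ = 1 := by
        rw [hu, norm_smul, Real.norm_eq_abs, abs_of_pos (by positivity : (0:ℝ) < A⁻¹), ← hA]
        field_simp
      have hinner : ∀ x : E3, ⟪a, x⟫ = A * ⟪u, x⟫ := by
        intro x
        rw [hu]
        conv_rhs => rw [real_inner_smul_left]
        rw [← mul_assoc, mul_inv_cancel₀ (ne_of_gt hApos), one_mul]
      -- layer cake formula
      have lc := hint.integral_eq_integral_meas_le (ae_of_all _ hfpos)
      set G : ℝ → ℝ := (Ioc (0:ℝ) 1).indicator (fun t => (48/M) * t ^ (-(2:ℝ)/3)) with hG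
      have hGint : Integrable G ((volume : Measure ℝ).restrict (Ioi 0)) := by
        have h1 : IntegrableOn (fun t : ℝ => t ^ (-(2:ℝ)/3)) (Ioc 0 1) volume :=
          (intervalIntegral.intervalIntegrable_rpow' (by norm_num)).1
        exact (IntegrableOn.integrable_indicator (h1.const_mul _) measurableSet_Ioc).restrict
      have hbound : ∀ t ∈ Ioi (0:ℝ), (μ {σ | t ≤ f σ}).toReal ≤ G t := by
        intro t ht
        have ht0 : (0:ℝ) < t := ht
        rcases le_or_gt t 1 with ht1 | ht1
        · -- t ∈ Ioc 0 1 : use the cap bound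
          set ct : ℝ := (t ^ (-(2:ℝ)/3) - 1 - Q) / M with hct
          have hsub : {σ : sphere (0:E3) 1 | t ≤ f σ} ⊆
              {σ : sphere (0:E3) 1 | ⟪u, (σ : E3)⟫ ≤ ct} := by
            intro σ hσ
            have htf : t ≤ f σ := hσ
            set X : ℝ := 1 + ‖a + b • (σ : E3)‖ ^ 2 with hX
            have hX1 : (1:ℝ) ≤ X := hXge1 σ
            have hXle : X ≤ t ^ (-(2:ℝ)/3) := by
              have h1 : (X ^ (-(3:ℝ)/2)) ^ (-(2:ℝ)/3) ≤ t ^ (-(2:ℝ)/3) :=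
                Real.rpow_le_rpow_of_nonpos ht0 htf (by norm_num)
              have h2 : (X ^ (-(3:ℝ)/2)) ^ (-(2:ℝ)/3) = X := by
                rw [← Real.rpow_mul (by linarith : (0:ℝ) ≤ X)]
                norm_num
              rwa [h2] at h1
            have hσ1 : ‖(σ : E3)‖ = 1 := mem_sphere_zero_iff_norm.mp σ.2
            have hbs : ‖b • (σ : E3)‖ = b := by
              rw [norm_smul, hσ1, mul_one, Real.norm_eq_abs, abs_of_nonneg hb0]
            have hexp : ‖a + b • (σ : E3)‖ ^ 2 = A^2 + 2 * (b * (A * ⟪u, (σ : E3)⟫)) + b^2 := by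
              rw [norm_add_sq_real, real_inner_smul_right, hinner, hbs, ← hA]
            have hMle : M * ⟪u, (σ : E3)⟫ ≤ t ^ (-(2:ℝ)/3) - 1 - Q := by
              rw [hX, hexp] at hXle
              rw [hM]
              nlinarith [hXle]
            show ⟪u, (σ : E3)⟫ ≤ ct
            rw [hct, le_div_iff₀ hMpos]
            nlinarith
          have hcap := cap_bound u hunorm ct
          have hle : μ {σ | t ≤ f σ} ≤ ENNReal.ofReal (48 * max 0 (1 + ct)) :=
            le_trans (measure_mono hsub) hcap
          have htpow : (0:ℝ) < t ^ (-(2:ℝ)/3) := Real.rpow_pos_of_pos ht0 _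
          have hctbd : max 0 (1 + ct) ≤ t ^ (-(2:ℝ)/3) / M := by
            apply max_le (by positivity)
            rw [hct]
            have h9 : 1 + (t ^ (-(2:ℝ)/3) - 1 - Q) / M
                = (M + (t ^ (-(2:ℝ)/3) - 1 - Q)) / M := by
              field_simp
            rw [h9, div_le_div_iff₀ hMpos hMpos]
            nlinarith [hMQ, hMpos]
          have hfinal : μ {σ | t ≤ f σ} ≤ ENNReal.ofReal (G t) := by
            refine hle.trans (ENNReal.ofReal_le_ofReal ?_)
            rw [hG, Set.indicator_of_mem (by exact ⟨ht0, ht1⟩ : t ∈ Ioc (0:ℝ) 1)]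
            calc 48 * max 0 (1 + ct) ≤ 48 * (t ^ (-(2:ℝ)/3) / M) := by
                  exact mul_le_mul_of_nonneg_left hctbd (by norm_num)
              _ = 48 / M * t ^ (-(2:ℝ)/3) := by ring
          refine ENNReal.toReal_le_of_le_ofReal ?_ hfinal
          rw [hG, Set.indicator_of_mem (by exact ⟨ht0, ht1⟩ : t ∈ Ioc (0:ℝ) 1)]
          positivity
        · -- t > 1 : the set is empty
          have hempty : {σ : sphere (0:E3) 1 | t ≤ f σ} = ∅ := by
            ext σ; simp only [Set.mem_setOf_eq, Set.mem_empty_iff_false, iff_false, not_le]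
            exact lt_of_le_of_lt (hf1 σ) ht1
          rw [hempty, measure_empty]
          rw [hG, Set.indicator_of_notMem (by simp [ht1] : t ∉ Ioc (0:ℝ) 1)]
          simp
      have hmono : ∫ t in Ioi (0:ℝ), (μ {σ | t ≤ f σ}).toReal ≤ ∫ t in Ioi (0:ℝ), G t :=
        integral_mono_of_nonneg (ae_of_all _ fun t => ENNReal.toReal_nonneg) hGint
          ((ae_restrict_mem measurableSet_Ioi).mono fun t ht => hbound t ht)
      have hGval : ∫ t in Ioi (0:ℝ), G t = 144 / M := by
        rw [hG, integral_indicator measurableSet_Ioc, Measure.restrict_restrict measurableSet_Ioc,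
          Set.inter_eq_self_of_subset_left Ioc_subset_Ioi_self]
        rw [MeasureTheory.integral_const_mul]
        rw [← intervalIntegral.integral_of_le zero_le_one,
          integral_rpow (Or.inl (by norm_num : (-1:ℝ) < -(2:ℝ)/3))]
        rw [Real.zero_rpow (by norm_num), Real.one_rpow]
        norm_num
        ring
      have hle144 : ∫ σ, f σ ∂μ ≤ 144 / M := by
        rw [lc]; rw [hGval] at hmono; exact hmono
      -- combine with the constant bound
      rcases le_or_gt Q 1 with hQ1 | hQ1
      · have h24 := hconstbd 1 hf1
        refine h24.trans ?_
        rw [le_div_iff₀ (by positivity)]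
        nlinarith
      · refine hle144.trans ?_
        rw [div_le_div_iff₀ hMpos (by positivity)]
        nlinarith
  refine key.trans ?_
  have hpar : Q = (‖v‖^2 + ‖v1‖^2)/2 := by
    have h1 : ‖v + v1‖^2 = ‖v‖^2 + 2*⟪v,v1⟫ + ‖v1‖^2 := norm_add_sq_real v v1
    have h2 : ‖v - v1‖^2 = ‖v‖^2 - 2*⟪v,v1⟫ + ‖v1‖^2 := norm_sub_sq_real v v1
    have h3 : A = ‖v + v1‖/2 := by
      rw [hA, ha, norm_smul]; simp [abs_of_nonneg]; ring
    rw [hQ, h3, hbdef]; nlinarith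
  rw [div_le_div_iff₀ (by positivity) (by nlinarith [sq_nonneg ‖v‖, sq_nonneg ‖v1‖])]
  nlinarith [sq_nonneg ‖v‖, sq_nonneg ‖v1‖]

end
end

section
/- Fix σ in the unit sphere S^2 of R^3 and define R_σ(u) = u/2 + (|u|/2)σ. Then R_σ is a bijection from { u ∈ R^3 : u·σ ≠ -|u| } onto { ν ∈ R^3 : ν·σ > 0 }, with inverse given by ν ↦ 2ν - (|ν|^2/(σ·ν)) σ. -/
open scoped RealInnerProductSpace

theorem Rsigma_bijection (σ : EuclideanSpace ℝ (Fin 3)) (hσ : ‖σ‖ = 1) :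
    Set.BijOn (fun u : EuclideanSpace ℝ (Fin 3) => (1/2 : ℝ) • u + (‖u‖ / 2) • σ)
        {u : EuclideanSpace ℝ (Fin 3) | ⟪u, σ⟫ ≠ -‖u‖}
        {ν : EuclideanSpace ℝ (Fin 3) | 0 < ⟪ν, σ⟫} ∧
    (∀ u ∈ {u : EuclideanSpace ℝ (Fin 3) | ⟪u, σ⟫ ≠ -‖u‖},
      (2 : ℝ) • ((1/2 : ℝ) • u + (‖u‖ / 2) • σ) -
        (‖(1/2 : ℝ) • u + (‖u‖ / 2) • σ‖ ^ 2 / ⟪σ, (1/2 : ℝ) • u + (‖u‖ / 2) • σ⟫) • σ = u) ∧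
    (∀ ν ∈ {ν : EuclideanSpace ℝ (Fin 3) | 0 < ⟪ν, σ⟫},
      (1/2 : ℝ) • ((2 : ℝ) • ν - (‖ν‖ ^ 2 / ⟪σ, ν⟫) • σ) +
        (‖(2 : ℝ) • ν - (‖ν‖ ^ 2 / ⟪σ, ν⟫) • σ‖ / 2) • σ = ν) := by
  have hσσ : ⟪σ, σ⟫ = 1 := by
    rw [real_inner_self_eq_norm_sq, hσ]; norm_num
  -- inner product of the image with σ
  have hinner : ∀ u : EuclideanSpace ℝ (Fin 3),
      ⟪(1/2 : ℝ) • u + (‖u‖ / 2) • σ, σ⟫ = (⟪u, σ⟫ + ‖u‖) / 2 := by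
    intro u
    rw [inner_add_left, real_inner_smul_left, real_inner_smul_left, hσσ]
    ring
  -- norm squared of the image
  have hnorm : ∀ u : EuclideanSpace ℝ (Fin 3),
      ‖(1/2 : ℝ) • u + (‖u‖ / 2) • σ‖ ^ 2 = ‖u‖ * (⟪u, σ⟫ + ‖u‖) / 2 := by
    intro u
    rw [norm_add_sq_real, norm_smul, norm_smul, real_inner_smul_left,
        real_inner_smul_right, hσ, Real.norm_eq_abs, Real.norm_eq_abs,
        abs_of_nonneg (by norm_num : (0:ℝ) ≤ 1/2),
        abs_of_nonneg (by positivity : (0:ℝ) ≤ ‖u‖ / 2)]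
    ring
  -- strict lower bound on inner product in the source set
  have hlow : ∀ u : EuclideanSpace ℝ (Fin 3), ⟪u, σ⟫ ≠ -‖u‖ → -‖u‖ < ⟪u, σ⟫ := by
    intro u hu
    have h1 : |⟪u, σ⟫| ≤ ‖u‖ * ‖σ‖ := abs_real_inner_le_norm u σ
    rw [hσ, mul_one] at h1
    exact lt_of_le_of_ne (neg_le_of_abs_le h1) (Ne.symm hu)
  -- left inverse formula
  have hleft : ∀ u : EuclideanSpace ℝ (Fin 3), ⟪u, σ⟫ ≠ -‖u‖ →
      (2 : ℝ) • ((1/2 : ℝ) • u + (‖u‖ / 2) • σ) -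
        (‖(1/2 : ℝ) • u + (‖u‖ / 2) • σ‖ ^ 2 / ⟪σ, (1/2 : ℝ) • u + (‖u‖ / 2) • σ⟫) • σ = u := by
    intro u hu
    have hpos : 0 < ⟪u, σ⟫ + ‖u‖ := by linarith [hlow u hu]
    have hco : ⟪σ, (1/2 : ℝ) • u + (‖u‖ / 2) • σ⟫ = (⟪u, σ⟫ + ‖u‖) / 2 := by
      rw [real_inner_comm]; exact hinner u
    have hdiv : ‖(1/2 : ℝ) • u + (‖u‖ / 2) • σ‖ ^ 2 /
        ⟪σ, (1/2 : ℝ) • u + (‖u‖ / 2) • σ⟫ = ‖u‖ := by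
      rw [hnorm u, hco, div_eq_iff (by positivity : (⟪u, σ⟫ + ‖u‖) / 2 ≠ 0)]
      ring
    rw [hdiv]
    module
  -- norm of the candidate preimage
  have hrnorm : ∀ ν : EuclideanSpace ℝ (Fin 3), 0 < ⟪ν, σ⟫ →
      ‖(2 : ℝ) • ν - (‖ν‖ ^ 2 / ⟪σ, ν⟫) • σ‖ = ‖ν‖ ^ 2 / ⟪σ, ν⟫ := by
    intro ν hν
    have hb : 0 < ⟪σ, ν⟫ := by rwa [real_inner_comm]
    have hc0 : 0 ≤ ‖ν‖ ^ 2 / ⟪σ, ν⟫ := by positivity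
    have hcb : (‖ν‖ ^ 2 / ⟪σ, ν⟫) * ⟪σ, ν⟫ = ‖ν‖ ^ 2 :=
      div_mul_cancel₀ _ (ne_of_gt hb)
    have hsq : ‖(2 : ℝ) • ν - (‖ν‖ ^ 2 / ⟪σ, ν⟫) • σ‖ ^ 2 = (‖ν‖ ^ 2 / ⟪σ, ν⟫) ^ 2 := by
      rw [norm_sub_sq_real, real_inner_smul_left, real_inner_smul_right,
          norm_smul, norm_smul, hσ, Real.norm_eq_abs, Real.norm_eq_abs,
          abs_of_nonneg (by norm_num : (0:ℝ) ≤ 2), abs_of_nonneg hc0,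
          real_inner_comm ν σ]
      have hcb' : ‖ν‖ ^ 2 / ⟪ν, σ⟫ * ⟪ν, σ⟫ = ‖ν‖ ^ 2 := div_mul_cancel₀ _ (ne_of_gt hν)
      have hcm : ⟪σ, ν⟫ = ⟪ν, σ⟫ := real_inner_comm ν σ
      nlinarith [hcb, hcb', hcm]
    have h0 : (0:ℝ) ≤ ‖(2 : ℝ) • ν - (‖ν‖ ^ 2 / ⟪σ, ν⟫) • σ‖ := norm_nonneg _
    nlinarith [hsq, h0, hc0]
  -- right inverse formula
  have hright : ∀ ν : EuclideanSpace ℝ (Fin 3), 0 < ⟪ν, σ⟫ →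
      (1/2 : ℝ) • ((2 : ℝ) • ν - (‖ν‖ ^ 2 / ⟪σ, ν⟫) • σ) +
        (‖(2 : ℝ) • ν - (‖ν‖ ^ 2 / ⟪σ, ν⟫) • σ‖ / 2) • σ = ν := by
    intro ν hν
    rw [hrnorm ν hν]
    module
  -- candidate preimage is in the source set
  have hmem : ∀ ν : EuclideanSpace ℝ (Fin 3), 0 < ⟪ν, σ⟫ →
      ⟪(2 : ℝ) • ν - (‖ν‖ ^ 2 / ⟪σ, ν⟫) • σ, σ⟫ ≠
        -‖(2 : ℝ) • ν - (‖ν‖ ^ 2 / ⟪σ, ν⟫) • σ‖ := by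
    intro ν hν
    rw [hrnorm ν hν, inner_sub_left, real_inner_smul_left, real_inner_smul_left, hσσ, mul_one]
    intro h
    linarith
  refine ⟨⟨?_, ?_, ?_⟩, ?_, ?_⟩
  · intro u hu
    simp only [Set.mem_setOf_eq] at hu ⊢
    rw [hinner u]
    linarith [hlow u hu]
  · intro u hu v hv h
    simp only [Set.mem_setOf_eq] at hu hv
    simp only at h
    rw [← hleft u hu, ← hleft v hv, h]
  · intro ν hν
    simp only [Set.mem_setOf_eq] at hν
    refine ⟨(2 : ℝ) • ν - (‖ν‖ ^ 2 / ⟪σ, ν⟫) • σ, hmem ν hν, ?_⟩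
    simp only
    exact hright ν hν
  · exact hleft
  · exact hright
end

section
/- Fix σ ∈ S^2. For ν ∈ R^3 with σ·ν > 0, the Jacobian determinant of the map ν ↦ 2ν - (|ν|^2/(σ·ν))σ equals 4|ν|^2/(σ·ν)^2. -/
open scoped RealInnerProductSpace
set_option maxHeartbeats 1000000 in
theorem Rsigma_inverse_jacobian (σ : EuclideanSpace ℝ (Fin 3)) (hσ : ‖σ‖ = 1)
    (ν : EuclideanSpace ℝ (Fin 3)) (hν : 0 < ⟪σ, ν⟫) :
    LinearMap.det
      ((fderiv ℝ (fun ν : EuclideanSpace ℝ (Fin 3) =>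
          (2 : ℝ) • ν - (‖ν‖ ^ 2 / ⟪σ, ν⟫) • σ) ν).toLinearMap)
      = 4 * ‖ν‖ ^ 2 / ⟪σ, ν⟫ ^ 2 := by
  have hs : ⟪σ, ν⟫ ≠ 0 := ne_of_gt hν
  have hv : HasFDerivAt (fun x : EuclideanSpace ℝ (Fin 3) => ⟪σ, x⟫) (innerSL ℝ σ) ν :=
    (innerSL ℝ σ).hasFDerivAt
  have hu : HasFDerivAt (fun x : EuclideanSpace ℝ (Fin 3) => ⟪x, x⟫)
      ((fderivInnerCLM ℝ (ν, ν)).comp ((ContinuousLinearMap.id ℝ _).prod (ContinuousLinearMap.id ℝ _))) ν :=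
    (hasFDerivAt_id ν).inner ℝ (hasFDerivAt_id ν)
  have hinv := (hasFDerivAt_inv hs).comp ν hv
  have hg := hu.mul hinv
  have hf := ((hasFDerivAt_id ν).const_smul (2:ℝ)).sub (hg.smul_const σ)
  rw [show (fun ν : EuclideanSpace ℝ (Fin 3) => (2:ℝ) • ν - (‖ν‖ ^ 2 / ⟪σ, ν⟫) • σ)
      = (fun x : EuclideanSpace ℝ (Fin 3) =>
          (2:ℝ) • id x - (inner ℝ x x * ((fun x : ℝ => x⁻¹) ∘ fun x => ⟪σ, x⟫) x) • σ) from
    funext fun x => by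
      simp only [real_inner_self_eq_norm_sq, div_eq_mul_inv, id, Function.comp]]
  rw [HasFDerivAt.fderiv (f := fun x : EuclideanSpace ℝ (Fin 3) =>
      (2:ℝ) • id x - (inner ℝ x x * ((fun x : ℝ => x⁻¹) ∘ fun x => ⟪σ, x⟫) x) • σ) hf]
  rw [← LinearMap.det_toMatrix (EuclideanSpace.basisFun (Fin 3) ℝ).toBasis, Matrix.det_fin_three]
  simp only [LinearMap.toMatrix_apply, OrthonormalBasis.coe_toBasis, EuclideanSpace.basisFun_apply,
    OrthonormalBasis.coe_toBasis_repr_apply, EuclideanSpace.basisFun_repr,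
    ContinuousLinearMap.coe_coe, ContinuousLinearMap.sub_apply, ContinuousLinearMap.smul_apply,
    ContinuousLinearMap.coe_id', id, ContinuousLinearMap.add_apply, ContinuousLinearMap.comp_apply,
    ContinuousLinearMap.smulRight_apply, ContinuousLinearMap.one_apply, ContinuousLinearMap.prod_apply,
    innerSL_apply_apply, fderivInnerCLM_apply, Function.comp, EuclideanSpace.inner_single_right,
    RCLike.star_def, starRingEnd_apply, star_trivial, PiLp.smul_apply, PiLp.sub_apply, smul_eq_mul]
  simp only [EuclideanSpace.inner_single_left, RCLike.star_def, starRingEnd_apply, star_trivial,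
    EuclideanSpace.single_apply, real_inner_self_eq_norm_sq]
  norm_num [Fin.sum_univ_three, show ((1:Fin 3)=2) = False from by decide,
    show ((2:Fin 3)=1) = False from by decide, show ((0:Fin 3)=2) = False from by decide,
    show ((2:Fin 3)=0) = False from by decide, show ((0:Fin 3)=1) = False from by decide,
    show ((1:Fin 3)=0) = False from by decide]
  have h1 : σ 0 ^ 2 + σ 1 ^ 2 + σ 2 ^ 2 = 1 := by
    have : (⟪σ, σ⟫ : ℝ) = 1 := by rw [real_inner_self_eq_norm_sq, hσ]; norm_num
    rw [PiLp.inner_apply] at this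
    simpa [Fin.sum_univ_three, RCLike.inner_apply, pow_two] using this
  have h3 : ‖ν‖ ^ 2 = ν 0 ^ 2 + ν 1 ^ 2 + ν 2 ^ 2 := by
    have : (⟪ν, ν⟫ : ℝ) = ‖ν‖ ^ 2 := real_inner_self_eq_norm_sq ν
    rw [PiLp.inner_apply] at this
    simp [Fin.sum_univ_three, RCLike.inner_apply, pow_two] at this
    linarith
  have hs' : σ 0 * ν 0 + σ 1 * ν 1 + σ 2 * ν 2 ≠ 0 := by
    have : (⟪σ, ν⟫ : ℝ) = σ 0 * ν 0 + σ 1 * ν 1 + σ 2 * ν 2 := by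
      rw [PiLp.inner_apply]; simp [Fin.sum_univ_three, RCLike.inner_apply]; ring
    rw [← this]; exact hs
  rw [show (⟪σ, ν⟫ : ℝ) = σ 0 * ν 0 + σ 1 * ν 1 + σ 2 * ν 2 by
    rw [PiLp.inner_apply]; simp [Fin.sum_univ_three, RCLike.inner_apply]; ring]
  rw [h3, show (4:ℝ) * (ν 0 ^ 2 + ν 1 ^ 2 + ν 2 ^ 2) / (σ 0 * ν 0 + σ 1 * ν 1 + σ 2 * ν 2) ^ 2
      = 4 * (ν 0 ^ 2 + ν 1 ^ 2 + ν 2 ^ 2) * (σ 0 ^ 2 + σ 1 ^ 2 + σ 2 ^ 2)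
        / (σ 0 * ν 0 + σ 1 * ν 1 + σ 2 * ν 2) ^ 2 from by rw [h1]; ring]
  field_simp [show ν 0 * σ 0 + ν 1 * σ 1 + ν 2 * σ 2 ≠ 0 by
    rw [mul_comm (ν 0), mul_comm (ν 1), mul_comm (ν 2)]; exact hs']
  ring
end

section
/- Let δ = 1/4. Suppose v, v1 ∈ R^3 satisfy |v1| ≤ |v|/4, and σ ∈ S^2 with (v - v1)·σ > 0. Then the post-collisional velocity v* = (v+v1)/2 + (|v-v1|/2)σ satisfies |v*| ≥ (√3/4)|v|. -/
open scoped RealInnerProductSpace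

theorem postcollisional_lower_bound (v v1 σ : EuclideanSpace ℝ (Fin 3)) (hσ : ‖σ‖ = 1)
    (hv1 : ‖v1‖ ≤ ‖v‖ / 4) (hb : 0 < ⟪v - v1, σ⟫) :
    Real.sqrt 3 / 4 * ‖v‖ ≤ ‖(1/2 : ℝ) • (v + v1) + (‖v - v1‖ / 2) • σ‖ := by
  set r := ‖v - v1‖ with hrdef
  have hrn : (0:ℝ) ≤ r := norm_nonneg _
  have hr : r ≤ ‖v‖ + ‖v1‖ := norm_sub_le _ _
  have ht1 : |⟪v1, σ⟫| ≤ ‖v1‖ := by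
    have := abs_real_inner_le_norm v1 σ
    simpa [hσ] using this
  have hb' : 0 < ⟪v, σ⟫ - ⟪v1, σ⟫ := by simpa [inner_sub_left] using hb
  have hruv : r^2 = ‖v‖^2 - 2*⟪v,v1⟫ + ‖v1‖^2 := by
    rw [hrdef, norm_sub_sq_real]
  have hw : ‖(1/2 : ℝ) • (v + v1) + (r / 2) • σ‖^2
      = (1/4)*(‖v‖^2 + 2*⟪v,v1⟫ + ‖v1‖^2) + (r/2)*(⟪v,σ⟫+⟪v1,σ⟫) + (r/2)^2 := by
    rw [norm_add_sq_real, norm_smul, norm_smul, mul_pow, mul_pow, norm_add_sq_real v v1,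
      real_inner_smul_left, real_inner_smul_right, inner_add_left, hσ]
    simp only [Real.norm_eq_abs, abs_of_nonneg (by linarith : (0:ℝ) ≤ r/2)]
    rw [abs_of_nonneg (by norm_num : (0:ℝ) ≤ 1/2)]
    ring
  have ht1' : -‖v1‖ ≤ ⟪v1, σ⟫ := neg_le_of_abs_le ht1
  have hv1n : (0:ℝ) ≤ ‖v1‖ := norm_nonneg _
  have hsq : (Real.sqrt 3 / 4 * ‖v‖)^2 ≤ ‖(1/2 : ℝ) • (v + v1) + (r / 2) • σ‖^2 := by
    rw [hw, mul_pow, div_pow, Real.sq_sqrt (by norm_num : (3:ℝ) ≥ 0)]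
    nlinarith [mul_nonneg hrn (by linarith : (0:ℝ) ≤ ⟪v,σ⟫ + ⟪v1,σ⟫ + 2*‖v1‖),
      mul_nonneg (by linarith : (0:ℝ) ≤ ‖v‖ + ‖v1‖ - r) hv1n,
      mul_nonneg hv1n (by linarith : (0:ℝ) ≤ ‖v‖/4 - ‖v1‖),
      sq_nonneg (‖v‖ - ‖v1‖), norm_nonneg v]
  have h0 : 0 ≤ Real.sqrt 3 / 4 * ‖v‖ := by positivity
  calc Real.sqrt 3 / 4 * ‖v‖ = Real.sqrt ((Real.sqrt 3 / 4 * ‖v‖)^2) := (Real.sqrt_sq h0).symm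
    _ ≤ Real.sqrt (‖(1/2 : ℝ) • (v + v1) + (r / 2) • σ‖^2) := Real.sqrt_le_sqrt hsq
    _ = _ := Real.sqrt_sq (norm_nonneg _)
end

section
/- For fixed v ∈ R^3 and ψ ∈ L^1(R^3), the integral ∫_{R^3 × S^2} |ψ(v1*)| · 1_{ (v - v1)·σ > 0 } dv1 dσ is bounded by C‖ψ‖_{L^1} for a universal constant C, uniformly in v, where v1* = (v+v1)/2 - (|v-v1|/2)σ = v - R_σ(v - v1) with R_σ(u) = u/2 + (|u|/2)σ. -/
open MeasureTheory Metric
open scoped RealInnerProductSpace ENNReal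

noncomputable section

abbrev E3 := EuclideanSpace ℝ (Fin 3)

def Tmap (σ u : E3) : E3 := (1/2 : ℝ) • u + (‖u‖/2) • σ

def Tder (σ u : E3) : E3 →L[ℝ] E3 :=
  (1/2 : ℝ) • ContinuousLinearMap.id ℝ E3 + ((2*‖u‖)⁻¹) • ((innerSL ℝ u).smulRight σ)

lemma Tder_apply (σ u x : E3) :
    Tder σ u x = (1/2:ℝ) • x + ((2*‖u‖)⁻¹ * ⟪u,x⟫) • σ := by
  simp [Tder, mul_smul]

lemma hasFDerivAt_Tmap (σ : E3) {u : E3} (hu : u ≠ 0) :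
    HasFDerivAt (Tmap σ) (Tder σ u) u := by
  have hn0 : ‖u‖ ≠ 0 := norm_ne_zero_iff.2 hu
  have hsq : HasFDerivAt (fun y : E3 => ‖y‖^2) (2 • innerSL ℝ u) u :=
    (hasStrictFDerivAt_norm_sq u).hasFDerivAt
  have hne : ‖u‖^2 ≠ 0 := pow_ne_zero _ hn0
  have hnorm : HasFDerivAt (fun y : E3 => ‖y‖) ((1 / (2 * ‖u‖)) • (2 • innerSL ℝ u) : E3 →L[ℝ] ℝ) u := by
    have h := hsq.sqrt hne
    rwa [show (fun y : E3 => √(‖y‖^2)) = fun y : E3 => ‖y‖ from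
        funext fun y => Real.sqrt_sq (norm_nonneg _),
      Real.sqrt_sq (norm_nonneg _)] at h
  have h2 := hnorm.smul_const ((1/2:ℝ) • σ)
  have h1 : HasFDerivAt (fun y : E3 => (1/2 : ℝ) • y)
      ((1/2 : ℝ) • ContinuousLinearMap.id ℝ E3) u :=
    (hasFDerivAt_id u).const_smul (1/2 : ℝ)
  have hT : HasFDerivAt (Tmap σ)
      ((1/2 : ℝ) • ContinuousLinearMap.id ℝ E3 +
        (((1 / (2 * ‖u‖)) • (2 • innerSL ℝ u) : E3 →L[ℝ] ℝ).smulRight ((1/2:ℝ) • σ))) u := by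
    refine (h1.add h2).congr_of_eventuallyEq (Filter.EventuallyEq.of_eq (funext fun y => ?_))
    rw [Tmap, Pi.add_apply, smul_smul]
    ring_nf
  refine hT.congr_fderiv ?_
  ext x : 1
  rw [ContinuousLinearMap.add_apply, ContinuousLinearMap.smulRight_apply, Tder_apply]
  simp only [ContinuousLinearMap.smul_apply, ContinuousLinearMap.coe_smul', Pi.smul_apply,
    ContinuousLinearMap.coe_id', id_eq, smul_eq_mul, innerSL_apply_apply]
  rw [smul_smul]
  congr 1
  field_simp
  ring

lemma Tder_det (σ u : E3) (hu : u ≠ 0) :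
    (Tder σ u : E3 →L[ℝ] E3).det = (1 + ⟪u,σ⟫/‖u‖)/8 := by
  have hn0 : ‖u‖ ≠ 0 := norm_ne_zero_iff.2 hu
  set B := (EuclideanSpace.basisFun (Fin 3) ℝ).toBasis with hB
  have hM : LinearMap.toMatrix B B (Tder σ u : E3 →ₗ[ℝ] E3) =
      (1/2 : ℝ) • (1 + Matrix.replicateCol (Fin 1) (fun i => σ i) *
        Matrix.replicateRow (Fin 1) (fun j => u j / ‖u‖)) := by
    ext i j
    rw [LinearMap.toMatrix_apply]
    simp only [hB, OrthonormalBasis.coe_toBasis, EuclideanSpace.basisFun_apply,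
      OrthonormalBasis.coe_toBasis_repr_apply, EuclideanSpace.basisFun_repr,
      ContinuousLinearMap.coe_coe, Tder_apply]
    simp only [PiLp.add_apply, PiLp.smul_apply, smul_eq_mul,
      EuclideanSpace.inner_single_right, EuclideanSpace.single_apply,
      Matrix.smul_apply, Matrix.add_apply, Matrix.one_apply, Matrix.mul_apply,
      Matrix.replicateCol_apply, Matrix.replicateRow_apply, Finset.sum_const, Finset.card_univ]
    by_cases h : i = j <;> simp [h] <;> field_simp <;> ring
  have := LinearMap.det_toMatrix B (Tder σ u : E3 →ₗ[ℝ] E3)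
  rw [hM] at this
  rw [ContinuousLinearMap.det, ← this, Matrix.det_smul]
  erw [Matrix.det_one_add_replicateCol_mul_replicateRow (ι := Fin 1) (fun i => σ i) (fun j => u j / ‖u‖)]
  have hdot : dotProduct (fun j => u j / ‖u‖) (fun i => σ i) = ⟪u,σ⟫/‖u‖ := by
    simp [dotProduct, PiLp.inner_apply, RCLike.inner_apply, Finset.sum_div]
    exact Finset.sum_congr rfl fun i _ => by ring
  rw [hdot]
  norm_num
  ring

lemma Tmap_injOn (σ : E3) (hσ : ‖σ‖ = 1) : Set.InjOn (Tmap σ) {u : E3 | 0 < ⟪u,σ⟫} := by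
  intro u hu u' hu' h
  simp only [Set.mem_setOf_eq] at hu hu'
  have l : ∀ (w : E3) (r : ℝ), (2:ℝ) • ((1/2:ℝ) • w + (r/2) • σ) = w + r • σ := by
    intro w r; module
  have e : u + ‖u‖ • σ = u' + ‖u'‖ • σ := by
    rw [← l u ‖u‖, ← l u' ‖u'‖]
    show (2:ℝ) • Tmap σ u = (2:ℝ) • Tmap σ u'
    rw [h]
  have key : u = u' + (‖u'‖ - ‖u‖) • σ := by
    have h2 : u = u' + ‖u'‖ • σ - ‖u‖ • σ := by rw [← e]; abel
    rw [sub_smul]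
    conv_lhs => rw [h2]
    abel
  have hnorm : ‖u‖^2 = ‖u'‖^2 + 2*((‖u'‖ - ‖u‖)*⟪u',σ⟫) + (‖u'‖ - ‖u‖)^2 := by
    conv_lhs => rw [key]
    rw [norm_add_sq_real, real_inner_smul_right, norm_smul]
    simp [hσ, mul_pow, sq_abs]
  have hfac : (‖u'‖ - ‖u‖) * (2*⟪u',σ⟫ + 2*‖u'‖) = 0 := by linear_combination -hnorm
  have ht : ‖u'‖ - ‖u‖ = 0 := by
    rcases mul_eq_zero.1 hfac with h0 | h0
    · exact h0
    · nlinarith [norm_nonneg u']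
  rw [key, ht, zero_smul, add_zero]

lemma slice_bound (σ : E3) (hσ : ‖σ‖ = 1) (G : E3 → ℝ≥0∞) :
    ∫⁻ u in {u : E3 | 0 < ⟪u,σ⟫}, G (Tmap σ u) ≤ 8 * ∫⁻ w, G w := by
  have hopen : IsOpen {u : E3 | 0 < ⟪u,σ⟫} :=
    isOpen_lt continuous_const (Continuous.inner continuous_id continuous_const)
  have hs := hopen.measurableSet
  have hne : ∀ u ∈ {u : E3 | 0 < ⟪u,σ⟫}, u ≠ 0 := by
    rintro u hu rfl; simp at hu
  have hderiv : ∀ u ∈ {u : E3 | 0 < ⟪u,σ⟫},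
      HasFDerivWithinAt (Tmap σ) (Tder σ u) {u : E3 | 0 < ⟪u,σ⟫} u :=
    fun u hu => (hasFDerivAt_Tmap σ (hne u hu)).hasFDerivWithinAt
  have hcov := lintegral_image_eq_lintegral_abs_det_fderiv_mul volume hs hderiv (Tmap_injOn σ hσ) G
  have hbound : ∀ u ∈ {u : E3 | 0 < ⟪u,σ⟫},
      G (Tmap σ u) ≤ 8 * (ENNReal.ofReal |(Tder σ u).det| * G (Tmap σ u)) := by
    intro u hu
    have hu' : (0:ℝ) < ⟪u,σ⟫ := hu
    have hdet : (1/8 : ℝ) ≤ |(Tder σ u).det| := by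
      rw [Tder_det σ u (hne u hu)]
      rw [abs_of_nonneg (by positivity)]
      have : 0 ≤ ⟪u,σ⟫/‖u‖ := by positivity
      linarith
    calc G (Tmap σ u) = 1 * G (Tmap σ u) := (one_mul _).symm
      _ ≤ (8 * ENNReal.ofReal |(Tder σ u).det|) * G (Tmap σ u) := by
          gcongr
          rw [show (8:ℝ≥0∞) = ENNReal.ofReal 8 by norm_num, ← ENNReal.ofReal_mul (by norm_num)]
          rw [show (1:ℝ≥0∞) = ENNReal.ofReal 1 by norm_num]
          exact ENNReal.ofReal_le_ofReal (by linarith)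
      _ = 8 * (ENNReal.ofReal |(Tder σ u).det| * G (Tmap σ u)) := by rw [mul_assoc]
  calc ∫⁻ u in {u : E3 | 0 < ⟪u,σ⟫}, G (Tmap σ u)
      ≤ ∫⁻ u in {u : E3 | 0 < ⟪u,σ⟫}, 8 * (ENNReal.ofReal |(Tder σ u).det| * G (Tmap σ u)) := by
        refine lintegral_mono_ae ?_
        filter_upwards [ae_restrict_mem hs] with u hu using hbound u hu
    _ = 8 * ∫⁻ u in {u : E3 | 0 < ⟪u,σ⟫}, ENNReal.ofReal |(Tder σ u).det| * G (Tmap σ u) :=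
        lintegral_const_mul' _ _ (by norm_num)
    _ = 8 * ∫⁻ w in Tmap σ '' {u : E3 | 0 < ⟪u,σ⟫}, G w := by rw [hcov]
    _ ≤ 8 * ∫⁻ w, G w := by gcongr; exact Measure.restrict_le_self

/-- The half-space slice bound, in the original variables. -/
lemma slice_bound' (v : E3) (σ : E3) (hσ : ‖σ‖ = 1) (H : E3 → ℝ≥0∞) :
    (∫⁻ v1 : E3, (if 0 < ⟪v - v1, σ⟫ then
        H ((1/2 : ℝ) • (v + v1) - (‖v - v1‖ / 2) • σ) else 0))
      ≤ 8 * ∫⁻ w, H w := by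
  have hopen : IsOpen {v1 : E3 | 0 < ⟪v - v1, σ⟫} :=
    isOpen_lt continuous_const
      (Continuous.inner (continuous_const.sub continuous_id) continuous_const)
  have h1 : (fun v1 : E3 => if 0 < ⟪v - v1, σ⟫ then
        H ((1/2 : ℝ) • (v + v1) - (‖v - v1‖ / 2) • σ) else 0)
      = Set.indicator {v1 : E3 | 0 < ⟪v - v1, σ⟫}
          (fun v1 => H ((1/2 : ℝ) • (v + v1) - (‖v - v1‖ / 2) • σ)) := by
    funext v1; rw [Set.indicator_apply]; rfl
  rw [h1, lintegral_indicator hopen.measurableSet]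
  have hpt : ∀ v1 : E3, (1/2 : ℝ) • (v + v1) - (‖v - v1‖ / 2) • σ
      = v - Tmap σ (v - v1) := by
    intro v1; rw [Tmap]; module
  have hcv := (Measure.measurePreserving_sub_left volume v).setLIntegral_comp_preimage_emb
      (MeasurableEquiv.subLeft v).measurableEmbedding
      (fun u => H (v - Tmap σ u)) {u : E3 | 0 < ⟪u,σ⟫}
  have hsub := (Measure.measurePreserving_sub_left volume v).lintegral_comp_emb
      (MeasurableEquiv.subLeft v).measurableEmbedding H
  calc (∫⁻ v1 in {v1 : E3 | 0 < ⟪v - v1, σ⟫},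
        H ((1/2 : ℝ) • (v + v1) - (‖v - v1‖ / 2) • σ))
      = ∫⁻ v1 in (fun v1 : E3 => v - v1) ⁻¹' {u : E3 | 0 < ⟪u,σ⟫},
          H (v - Tmap σ (v - v1)) := lintegral_congr fun v1 => by rw [hpt v1]
    _ = ∫⁻ u in {u : E3 | 0 < ⟪u,σ⟫}, H (v - Tmap σ u) := hcv
    _ ≤ 8 * ∫⁻ w, H (v - w) := slice_bound σ hσ (fun w => H (v - w))
    _ = 8 * ∫⁻ w, H w := by rw [hsub]

theorem precollisional_averaging :
    ∃ C : ℝ, 0 < C ∧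
      ∀ (v : EuclideanSpace ℝ (Fin 3)) (ψ : EuclideanSpace ℝ (Fin 3) → ℝ), Integrable ψ →
        (∫⁻ v1 : EuclideanSpace ℝ (Fin 3),
            ∫⁻ σ : sphere (0 : EuclideanSpace ℝ (Fin 3)) 1,
              Set.indicator
                {σ : sphere (0 : EuclideanSpace ℝ (Fin 3)) 1 |
                  0 < ⟪v - v1, (σ : EuclideanSpace ℝ (Fin 3))⟫}
                (fun σ => ENNReal.ofReal
                  |ψ ((1/2 : ℝ) • (v + v1) -
                      (‖v - v1‖ / 2) • (σ : EuclideanSpace ℝ (Fin 3)))|) σ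
              ∂((volume : Measure (EuclideanSpace ℝ (Fin 3))).toSphere)
            ∂volume)
          ≤ ENNReal.ofReal (C * ∫ w, |ψ w|) := by
  classical
  set K : ℝ≥0∞ := (volume : Measure E3).toSphere Set.univ with hK
  have hKtop : K ≠ ⊤ := measure_ne_top _ _
  refine ⟨8 * K.toReal + 1, by positivity, ?_⟩
  intro v ψ hψ
  set Sph := sphere (0 : E3) 1
  set ν : Measure Sph := (volume : Measure E3).toSphere with hν
  -- the abstract integrand
  set Φ : (E3 → ℝ≥0∞) → E3 → Sph → ℝ≥0∞ := fun H v1 σ =>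
    if 0 < ⟪v - v1, (σ : E3)⟫ then
      H ((1/2 : ℝ) • (v + v1) - (‖v - v1‖ / 2) • (σ : E3)) else 0 with hΦ
  -- measurability of Φ H for measurable H
  have hstc : Continuous (fun p : E3 × Sph =>
      (1/2 : ℝ) • (v + p.1) - (‖v - p.1‖ / 2) • ((p.2 : E3))) := by
    apply Continuous.sub
    · exact (continuous_const.add continuous_fst).const_smul (1/2 : ℝ)
    · exact (((continuous_const.sub continuous_fst).norm).div_const 2).smul
        (continuous_subtype_val.comp continuous_snd)
  have hset : MeasurableSet {p : E3 × Sph | 0 < ⟪v - p.1, (p.2 : E3)⟫} :=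
    (isOpen_lt continuous_const (Continuous.inner (continuous_const.sub continuous_fst)
      (continuous_subtype_val.comp continuous_snd))).measurableSet
  have hmeasΦ : ∀ H : E3 → ℝ≥0∞, Measurable H →
      Measurable (fun p : E3 × Sph => Φ H p.1 p.2) := by
    intro H hH
    exact Measurable.ite hset (hH.comp hstc.measurable) measurable_const
  -- total bound for measurable H
  have htot : ∀ H : E3 → ℝ≥0∞, Measurable H →
      (∫⁻ v1, ∫⁻ σ, Φ H v1 σ ∂ν) ≤ K * (8 * ∫⁻ w, H w) := by
    intro H hH
    rw [lintegral_lintegral_swap (hmeasΦ H hH).aemeasurable]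
    calc (∫⁻ σ : Sph, ∫⁻ v1, Φ H v1 σ ∂volume ∂ν)
        ≤ ∫⁻ _σ : Sph, (8 * ∫⁻ w : E3, H w ∂(volume : Measure E3)) ∂ν := by
          refine lintegral_mono fun σ => ?_
          exact slice_bound' v (σ : E3) (mem_sphere_zero_iff_norm.mp σ.2) H
      _ = K * (8 * ∫⁻ w, H w) := by rw [lintegral_const, mul_comm]
  -- measurable representative of ψ
  obtain ⟨g, hgmeas, hψg⟩ : ∃ g : E3 → ℝ, Measurable g ∧ ψ =ᵐ[volume] g :=
    ⟨hψ.1.mk ψ, hψ.1.measurable_mk, hψ.1.ae_eq_mk⟩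
  obtain ⟨N, hNsub, hNmeas, hNnull⟩ :=
    exists_measurable_superset_of_null (ae_iff.1 hψg)
  set HN : E3 → ℝ≥0∞ := N.indicator 1 with hHN
  have hHNmeas : Measurable HN := measurable_one.indicator hNmeas
  have hHNint : (∫⁻ w, HN w) = 0 := by
    rw [hHN, lintegral_indicator hNmeas]
    simp [hNnull]
  have hzero : (∫⁻ v1, ∫⁻ σ, Φ HN v1 σ ∂ν) = 0 := by
    refine le_antisymm ?_ zero_le
    have := htot HN hHNmeas
    rwa [hHNint, mul_zero, mul_zero] at this
  have hImeas : Measurable fun v1 => ∫⁻ σ, Φ HN v1 σ ∂ν :=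
    Measurable.lintegral_prod_right' (hmeasΦ HN hHNmeas)
  have hae : ∀ᵐ v1 ∂(volume : Measure E3), (∫⁻ σ, Φ HN v1 σ ∂ν) = 0 :=
    (lintegral_eq_zero_iff hImeas).1 hzero
  -- replace ψ by g in the inner integral, a.e. v1
  set Hψ : E3 → ℝ≥0∞ := fun w => ENNReal.ofReal |ψ w| with hHψ
  set Hg : E3 → ℝ≥0∞ := fun w => ENNReal.ofReal |g w| with hHg
  have hinner : ∀ᵐ v1 ∂(volume : Measure E3),
      (∫⁻ σ, Φ Hψ v1 σ ∂ν) = ∫⁻ σ, Φ Hg v1 σ ∂ν := by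
    filter_upwards [hae] with v1 hv1
    -- the bad σ-set is null
    have hbadm : MeasurableSet {σ : Sph | 0 < ⟪v - v1, (σ : E3)⟫ ∧
        ((1/2 : ℝ) • (v + v1) - (‖v - v1‖ / 2) • (σ : E3)) ∈ N} := by
      have hA : MeasurableSet {σ : Sph | 0 < ⟪v - v1, (σ : E3)⟫} :=
        measurableSet_lt measurable_const
          (Continuous.measurable (Continuous.inner continuous_const continuous_subtype_val))
      have hB : MeasurableSet {σ : Sph |
          ((1/2 : ℝ) • (v + v1) - (‖v - v1‖ / 2) • (σ : E3)) ∈ N} := by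
        refine Continuous.measurable ?_ hNmeas
        exact continuous_const.sub
          (((continuous_const.sub continuous_const).norm.div_const 2).smul
            continuous_subtype_val)
      exact hA.inter hB
    have hind : (fun σ : Sph => Φ HN v1 σ) = Set.indicator {σ : Sph |
        0 < ⟪v - v1, (σ : E3)⟫ ∧
        ((1/2 : ℝ) • (v + v1) - (‖v - v1‖ / 2) • (σ : E3)) ∈ N} 1 := by
      funext σ
      simp only [hΦ, hHN, Set.indicator_apply, Set.mem_setOf_eq]
      split_ifs <;> first | rfl | tauto
    have hbadnull : ν {σ : Sph | 0 < ⟪v - v1, (σ : E3)⟫ ∧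
        ((1/2 : ℝ) • (v + v1) - (‖v - v1‖ / 2) • (σ : E3)) ∈ N} = 0 := by
      rw [← lintegral_indicator_one hbadm, ← hind]
      exact hv1
    refine lintegral_congr_ae ?_
    have : ∀ᵐ σ ∂ν, σ ∉ {σ : Sph | 0 < ⟪v - v1, (σ : E3)⟫ ∧
        ((1/2 : ℝ) • (v + v1) - (‖v - v1‖ / 2) • (σ : E3)) ∈ N} :=
      (ae_iff.2 (by simpa using hbadnull))
    filter_upwards [this] with σ hσ
    by_cases h1 : 0 < ⟪v - v1, (σ : E3)⟫
    · have h2 : ((1/2 : ℝ) • (v + v1) - (‖v - v1‖ / 2) • (σ : E3)) ∉ N := by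
        intro h2; exact hσ ⟨h1, h2⟩
      have h3 : ψ ((1/2 : ℝ) • (v + v1) - (‖v - v1‖ / 2) • (σ : E3))
          = g ((1/2 : ℝ) • (v + v1) - (‖v - v1‖ / 2) • (σ : E3)) := by
        by_contra hc
        exact h2 (hNsub hc)
      simp only [hΦ, hHψ, hHg]
      rw [if_pos h1, if_pos h1, h3]
    · simp only [hΦ]
      rw [if_neg h1, if_neg h1]
  -- the LHS equals the Φ Hψ double integral
  have hLHS : (∫⁻ v1 : E3, ∫⁻ σ : Sph,
        Set.indicator {σ : Sph | 0 < ⟪v - v1, (σ : E3)⟫}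
          (fun σ => ENNReal.ofReal |ψ ((1/2 : ℝ) • (v + v1) -
            (‖v - v1‖ / 2) • (σ : E3))|) σ ∂ν ∂volume)
      = ∫⁻ v1, ∫⁻ σ, Φ Hψ v1 σ ∂ν ∂volume := by
    refine lintegral_congr fun v1 => lintegral_congr fun σ => ?_
    rw [Set.indicator_apply]
    rfl
  rw [hLHS, lintegral_congr_ae hinner]
  -- integral identity
  have hint : (∫⁻ w, Hg w) = ENNReal.ofReal (∫ w, |ψ w|) := by
    have hae2 : (fun w => ENNReal.ofReal |ψ w|) =ᵐ[(volume : Measure E3)] Hg :=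
      hψg.mono fun x hx => by simp only [hHg]; rw [hx]
    rw [← lintegral_congr_ae hae2]
    exact (ofReal_integral_eq_lintegral_ofReal hψ.abs
      (Filter.Eventually.of_forall fun x => abs_nonneg _)).symm
  have hInn : 0 ≤ ∫ w, |ψ w| := integral_nonneg fun w => abs_nonneg _
  calc (∫⁻ v1, ∫⁻ σ, Φ Hg v1 σ ∂ν ∂volume)
      ≤ K * (8 * ∫⁻ w, Hg w) := htot Hg (hgmeas.abs.ennreal_ofReal)
    _ = ENNReal.ofReal K.toReal * (ENNReal.ofReal 8 * ENNReal.ofReal (∫ w, |ψ w|)) := by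
        rw [hint, ENNReal.ofReal_toReal hKtop]
        norm_num
    _ = ENNReal.ofReal (K.toReal * (8 * ∫ w, |ψ w|)) := by
        rw [ENNReal.ofReal_mul ENNReal.toReal_nonneg, ENNReal.ofReal_mul (by norm_num)]
    _ ≤ ENNReal.ofReal ((8 * K.toReal + 1) * ∫ w, |ψ w|) := by
        refine ENNReal.ofReal_le_ofReal ?_
        nlinarith [ENNReal.toReal_nonneg (a := K)]
end
end
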